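/- For k ≥ r ≥ 3 and p,t ≥ 0, if π is a partition in C_<(k,r|p,t) such that π^{(2)}_p ≥ 2t+6, then every part of π equal to 2t+2 or 2t+4 has mark at most 1 in GG(π), i.e., the marks of parts 2t+2 and 2t+4 are at most 1 in GG(π). -/

import Mathlib

namespace Bressoud

/-- A partition: a weakly decreasing list of positive integers. -/
structure Partition where
  parts : List ℕ
  pos : ∀ x ∈ parts, 0 < x
  sorted : parts.Pairwise (· ≥ ·)

namespace Partition

/-- `|π|`, the sum of the parts of `π`. -/
def size (π : Partition) : ℕ := π.parts.sum

/-- `ℓ(π)`, the number of parts of `π`. -/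
def numParts (π : Partition) : ℕ := π.parts.length

end Partition

lemma exists_pos_not_mem (s : List ℕ) : ∃ n, 0 < n ∧ n ∉ s := by
  refine ⟨s.sum + 1, Nat.succ_pos _, fun h => ?_⟩
  have := List.single_le_sum (l := s) (fun x _ => Nat.zero_le x) _ h
  omega

/-- The least positive integer not occurring in `s`. -/
def mex1 (s : List ℕ) : ℕ := Nat.find (exists_pos_not_mem s)

/-- Parts `p ≥ q` conflict (must receive different marks) when `p - q ≤ 2`,
with strict inequality when `p` is odd. -/
def conflict (p q : ℕ) : Bool :=
  if p % 2 = 1 then decide (p - q < 2) else decide (p - q ≤ 2)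

/-- Greedy computation of the Göllnitz–Gordon marking: the parts are processed
from smallest to largest (second argument: remaining parts in increasing
order; first argument: already processed parts with their marks), and each
part receives the least positive mark different from the marks of all already
processed conflicting parts. -/
def ggAux : List (ℕ × ℕ) → List ℕ → List (ℕ × ℕ)
  | acc, [] => acc
  | acc, p :: rest =>
      ggAux ((p, mex1 ((acc.filter fun q => conflict p q.1).map Prod.snd)) :: acc) rest

/-- The Göllnitz–Gordon marking `GG(π)` of `π`, as a list of (part, mark)
pairs in decreasing order of parts. -/
def ggMarks (π : Partition) : List (ℕ × ℕ) := ggAux [] π.parts.reverse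

/-- There is an `m`-marked part equal to `x` in `GG(π)`. -/
def Marked (π : Partition) (x m : ℕ) : Prop := (x, m) ∈ ggMarks π

instance (π : Partition) (x m : ℕ) : Decidable (Marked π x m) := by
  unfold Marked; infer_instance

/-- The `i`-th row of `GG(π)`: the `i`-marked parts, in decreasing order. -/
def row (π : Partition) (i : ℕ) : List ℕ :=
  ((ggMarks π).filter fun q => q.2 == i).map Prod.fst

/-- `N_i(π)`: the number of `i`-marked parts of `π`. -/
def Nmk (π : Partition) (i : ℕ) : ℕ := (row π i).length

/-- `π^{(i)}_j` as a natural number (meaningful for `1 ≤ j ≤ N_i(π)`;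
junk value `0` otherwise). -/
def nth (π : Partition) (i j : ℕ) : ℕ := (row π i).getD (j - 1) 0

/-- The canonical embedding of the natural numbers into `EReal`. -/
noncomputable def natE (n : ℕ) : EReal := ((n : ℝ) : EReal)

/-- `π^{(i)}_j` as an extended real, with the conventions `π^{(i)}_0 = +∞`
and `π^{(i)}_j = -∞` for `j > N_i(π)`. -/
noncomputable def rowVal (π : Partition) (i j : ℕ) : EReal :=
  if j = 0 then ⊤
  else
    match (row π i)[j - 1]? with
    | some x => natE x
    | none => ⊥

/-- The largest `l ≥ 0` such that there is no odd part of `π` greater than or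
equal to `π^{(2)}_l` (the indices `1 ≤ j ≤ N₂(π)` with this property form an
initial segment, so this is also their number). -/
def bigL (π : Partition) : ℕ :=
  ((List.range' 1 (Nmk π 2)).filter fun j =>
    decide (∀ x ∈ π.parts, x % 2 = 1 → x < nth π 2 j)).length

/-- `startPair π b = (starting type of π^{(2)}_b, s_b(π))` for `1 ≤ b ≤ N₂(π)`.
Starting types are encoded by integers: `-1` stands for `s₋₁`, and `0,1,2,3`
for `s₀,s₁,s₂,s₃`; the value `9` is a junk value used when no case applies. -/
def startPair (π : Partition) : ℕ → ℤ × ℕ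
  | 0 => (9, 0)
  | b + 1 =>
    let v := nth π 2 (b + 1)
    if bigL π < b + 1 then (-1, 0)
    else
      let okLow : Bool :=
        if b = 0 then !decide ((v + 2) ∈ π.parts)
        else !decide (Marked π (v + 2) 1) || decide ((startPair π b).2 = v + 2)
      let ok2 : Bool :=
        if b = 0 then decide (Marked π (v + 2) 1)
        else decide (Marked π (v + 2) 1) && !decide ((startPair π b).2 = v + 2)
      if decide (Marked π (v - 1) 1) && okLow then (0, v - 1)
      else if decide (Marked π (v - 2) 1) && okLow then (1, v - 2)
      else if ok2 then (2, v + 2)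
      else if decide (Marked π v 1) then (3, v)
      else (9, 0)

/-- The starting type of `π^{(2)}_b`, encoded as an integer. -/
def startType (π : Partition) (b : ℕ) : ℤ := (startPair π b).1

/-- The set `C(k,r)`: partitions with no repeated odd part, in which the parts
equal to `1` and `2` have marks at most `r - 1`, and whose Göllnitz–Gordon
marking has at most `k - 1` rows. -/
def C (k r : ℕ) : Set Partition :=
  { π | (∀ x, x % 2 = 1 → π.parts.count x ≤ 1) ∧
        (∀ x m, Marked π x m → x ≤ 2 → m ≤ r - 1) ∧
        (∀ x m, Marked π x m → m ≤ k - 1) }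

/-- The set `C_<(k,r|p,t)`. -/
noncomputable def Clt (k r p t : ℕ) : Set Partition :=
  { π | π ∈ C k r ∧
        (∀ x ∈ π.parts, x % 2 = 1 → x < 2 * t + 1) ∧
        rowVal π 2 (p + 1) < natE (2 * t + 1) ∧
        natE (2 * t + 1) < rowVal π 2 p ∧
        (rowVal π 2 p = natE (2 * t + 2) →
          startType π p = 2 ∨ startType π p = 3) ∧
        (rowVal π 2 (p + 1) = natE (2 * t) →
          startType π (p + 1) = 0 ∨ startType π (p + 1) = 1) }

/-- The set `C_=(k,r|p,t)`. -/
noncomputable def Ceq (k r p t : ℕ) : Set Partition :=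
  { π | π ∈ C k r ∧
        (2 * t + 1) ∈ π.parts ∧
        (∀ x ∈ π.parts, x % 2 = 1 → x ≤ 2 * t + 1) ∧
        (∀ m, Marked π (2 * t + 1) m → m ≤ 2) ∧
        natE (2 * t + 2) ≤ rowVal π 2 p ∧
        rowVal π 2 (p + 1) ≤ natE (2 * t + 2) ∧
        ((∃ j, 1 ≤ j ∧ j ≤ Nmk π 2 ∧ nth π 2 j = 2 * t + 2 ∧ startType π j = 0) →
          rowVal π 2 (p + 1) = natE (2 * t + 2) ∧
          ∃ i, 1 ≤ i ∧ i ≤ p + 1 ∧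
            nth π 2 i = 2 * t + 2 + 4 * (p + 1 - i) ∧
            π.parts.count (2 * t + 2 + 4 * (p + 1 - i)) = 1) ∧
        ((∃ j, 1 ≤ j ∧ j ≤ Nmk π 2 ∧ nth π 2 j = 2 * t + 2 ∧ startType π j = 2) →
          rowVal π 2 p = natE (2 * t + 2)) ∧
        ((2 * t + 2) ∈ π.parts → ¬ Marked π (2 * t + 2) 2 →
          rowVal π 2 p = natE (2 * t + 4) ∧ startType π p = 3 ∧
          ∃ i, 1 ≤ i ∧ i ≤ p ∧
            nth π 2 i = 2 * t + 4 + 4 * (p - i) ∧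
            (2 * t + 4 + 4 * (p - i) + 2) ∉ π.parts) }

/-- The first starting cluster index `p₁` of `π` (with `p₀ = p + 1`): the least
`j ≥ 1` such that `π^{(2)}_j = π^{(2)}_p + 4(p - j)` and all of
`π^{(2)}_j, …, π^{(2)}_p` have the same starting type as `π^{(2)}_p`. -/
def firstCluster (π : Partition) (p : ℕ) : ℕ :=
  ((List.range' 1 p).filter fun j =>
    (List.range' j (p + 1 - j)).all fun i =>
      decide (nth π 2 i = nth π 2 p + 4 * (p - i)) &&
      decide (startType π i = startType π p)).headD p

/-- The set `ℰ(k,r)` of partitions in `C(k,r)` with no odd parts. -/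
def E (k r : ℕ) : Set Partition :=
  { π | π ∈ C k r ∧ ∀ x ∈ π.parts, x % 2 = 0 }

/-- `C_<(k,r|m) = ⋃_{p+t=m} C_<(k,r|p,t)`. -/
noncomputable def Cltm (k r m : ℕ) : Set Partition :=
  { π | ∃ p t, p + t = m ∧ π ∈ Clt k r p t }

/-- `C_=(k,r|m) = ⋃_{p+t=m} C_=(k,r|p,t)`. -/
noncomputable def Ceqm (k r m : ℕ) : Set Partition :=
  { π | ∃ p t, p + t = m ∧ π ∈ Ceq k r p t }

/-- `I_N`: partitions into distinct odd parts, each at least `2N + 1`. -/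
def Iset (N : ℕ) : Set Partition :=
  { ζ | (∀ x ∈ ζ.parts, x % 2 = 1 ∧ 2 * N + 1 ≤ x) ∧ ζ.parts.Nodup }

/-- `F(3,3)`: pairs `(π, ζ)` with `π ∈ ℰ(3,3)` and `ζ ∈ I_{N₂(π)}`. -/
noncomputable def F33 : Set (Partition × Partition) :=
  { pq | pq.1 ∈ E 3 3 ∧ pq.2 ∈ Iset (Nmk pq.1 2) }

/-!
If `2t+2` or `2t+4` had mark at least `2`, the greedy marking would put a `2`-marked part at
most `2` below it. The second row has no part strictly between `2t` and `2t+6`, so the part is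
`2t+2` and `π^{(2)}_{p+1} = 2t`, which by condition (4) has starting type `s₀` or `s₁`: there is a
`1`-marked part `2t-1` or `2t-2`. The `1`-marked part conflicting with `2t+2` is then neither
`2t` (it would conflict with that part), nor `2t+1` (no odd part reaches `2t+1`), nor `2t+2`:
for `p = 0`, types `s₀`, `s₁` exclude a part `2t+2` altogether, and for `p > 0` they allow a
`1`-marked `2t+2` only if `s_p = 2t+2`, whereas `s_p` is `0` or at least `π^{(2)}_p - 2 ≥ 2t+4`.
-/

lemma mex1_not_mem (s : List ℕ) : mex1 s ∉ s := (Nat.find_spec (exists_pos_not_mem s)).2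

lemma mem_of_lt_mex1 {s : List ℕ} {i : ℕ} (hi : 0 < i) (his : i < mex1 s) : i ∈ s := by
  by_contra h
  exact Nat.find_min (exists_pos_not_mem s) his ⟨hi, h⟩

lemma sub_le_two_of_conflict {x q : ℕ} (h : conflict x q = true) : x - q ≤ 2 := by
  unfold conflict at h
  split at h <;> simp at h <;> omega

lemma conflict_of_even {x q : ℕ} (hx : x % 2 = 0) (h : x - q ≤ 2) : conflict x q = true := by
  simp [conflict, hx, h]

def ConflictFree (L : List (ℕ × ℕ)) : Prop :=
  ∀ u ∈ L, ∀ v ∈ L, v.1 < u.1 → conflict u.1 v.1 = true → u.2 ≠ v.2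

def MarksMinimal (L : List (ℕ × ℕ)) : Prop :=
  ∀ u ∈ L, ∀ i, 0 < i → i < u.2 → ∃ v ∈ L, v.1 ≤ u.1 ∧ conflict u.1 v.1 = true ∧ v.2 = i

section ggAux

variable {acc : List (ℕ × ℕ)} {p : ℕ}

lemma ConflictFree.cons_mex1 (h : ConflictFree acc) (hp : ∀ e ∈ acc, e.1 ≤ p) :
    ConflictFree ((p, mex1 ((acc.filter fun q => conflict p q.1).map Prod.snd)) :: acc) := by
  intro u hu v hv hvu hc
  rcases List.mem_cons.mp hu with rfl | hu <;> rcases List.mem_cons.mp hv with rfl | hv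
  · exact absurd hvu (lt_irrefl _)
  · intro he
    have hmem : v.2 ∈ (acc.filter fun q => conflict p q.1).map Prod.snd :=
      List.mem_map_of_mem (List.mem_filter.mpr ⟨hv, hc⟩)
    rw [← he] at hmem
    exact mex1_not_mem _ hmem
  · exact absurd (hp u hu) (not_le.mpr hvu)
  · exact h u hu v hv hvu hc

lemma MarksMinimal.cons_mex1 (h : MarksMinimal acc) (hp : ∀ e ∈ acc, e.1 ≤ p) :
    MarksMinimal ((p, mex1 ((acc.filter fun q => conflict p q.1).map Prod.snd)) :: acc) := by
  intro u hu i hi hiu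
  rcases List.mem_cons.mp hu with rfl | hu
  · obtain ⟨v, hv, rfl⟩ := List.mem_map.mp (mem_of_lt_mex1 hi hiu)
    obtain ⟨hv, hc⟩ := List.mem_filter.mp hv
    exact ⟨v, List.mem_cons_of_mem _ hv, hp v hv, hc, rfl⟩
  · obtain ⟨v, hv, hvu, hc, hvi⟩ := h u hu i hi hiu
    exact ⟨v, List.mem_cons_of_mem _ hv, hvu, hc, hvi⟩

end ggAux

lemma map_fst_ggAux (l : List ℕ) (acc : List (ℕ × ℕ)) :
    (ggAux acc l).map Prod.fst = l.reverse ++ acc.map Prod.fst := by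
  induction l generalizing acc with
  | nil => simp [ggAux]
  | cons p rest ih => simp [ggAux, ih]

/-- `l.reverse ++ acc.map Prod.fst` lists the parts of the final marking `ggAux acc l`, so
`hsorted` says that the parts are processed in increasing order. -/
lemma ggAux_induction (P : List (ℕ × ℕ) → Prop)
    (step : ∀ acc p, P acc → (∀ e ∈ acc, e.1 ≤ p) →
      P ((p, mex1 ((acc.filter fun q => conflict p q.1).map Prod.snd)) :: acc))
    (l : List ℕ) (acc : List (ℕ × ℕ)) (hsorted : (l.reverse ++ acc.map Prod.fst).Pairwise (· ≥ ·))
    (hacc : P acc) : P (ggAux acc l) := by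
  induction l generalizing acc with
  | nil => exact hacc
  | cons p rest ih =>
    rw [List.reverse_cons, List.append_assoc, List.singleton_append] at hsorted
    have hp : ∀ e ∈ acc, e.1 ≤ p := fun e he =>
      (List.pairwise_cons.mp (List.pairwise_append.mp hsorted).2.1).1 _ (List.mem_map_of_mem he)
    exact ih _ hsorted (step acc p hacc hp)

lemma conflictFree_ggMarks (π : Partition) : ConflictFree (ggMarks π) :=
  ggAux_induction _ (fun _ _ h hp => h.cons_mex1 hp) _ _ (by simpa using π.sorted)
    (by simp [ConflictFree])

lemma marksMinimal_ggMarks (π : Partition) : MarksMinimal (ggMarks π) :=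
  ggAux_induction _ (fun _ _ h hp => h.cons_mex1 hp) _ _ (by simpa using π.sorted)
    (by simp [MarksMinimal])

lemma map_fst_ggMarks (π : Partition) : (ggMarks π).map Prod.fst = π.parts := by
  simp [ggMarks, map_fst_ggAux]

lemma sortedGE_row (π : Partition) (i : ℕ) : (row π i).SortedGE := by
  refine List.Pairwise.sortedGE (π.sorted.sublist ?_)
  rw [← map_fst_ggMarks π]
  exact List.filter_sublist.map _

namespace Marked

variable {π : Partition} {x m : ℕ}

lemma mem_parts (h : Marked π x m) : x ∈ π.parts :=
  map_fst_ggMarks π ▸ List.mem_map_of_mem (f := Prod.fst) h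

lemma mem_row (h : Marked π x m) : x ∈ row π m :=
  List.mem_map.mpr ⟨(x, m), List.mem_filter.mpr ⟨h, by simp⟩, rfl⟩

lemma conflict_eq_false {y : ℕ} (hx : Marked π x m) (hy : Marked π y m) (hyx : y < x) :
    conflict x y = false := by
  by_contra h
  exact conflictFree_ggMarks π _ hx _ hy hyx (by simpa using h) rfl

lemma exists_near {i : ℕ} (h : Marked π x m) (hi : 0 < i) (him : i ≤ m) :
    ∃ q, x - 2 ≤ q ∧ q ≤ x ∧ Marked π q i := by
  rcases him.eq_or_lt with rfl | him
  · exact ⟨x, by omega, le_rfl, h⟩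
  obtain ⟨⟨q, i⟩, hq, hqx, hc, rfl⟩ := marksMinimal_ggMarks π _ h i hi him
  exact ⟨q, by have := sub_le_two_of_conflict hc; omega, hqx, hq⟩

end Marked

lemma natE_le_natE_iff {a b : ℕ} : natE a ≤ natE b ↔ a ≤ b := by
  simp [natE]

lemma natE_lt_natE_iff {a b : ℕ} : natE a < natE b ↔ a < b := by
  simp [natE]

section rowVal

variable {π : Partition} {i j : ℕ}

lemma rowVal_succ_of_lt (h : j < (row π i).length) : rowVal π i (j + 1) = natE (row π i)[j] := by
  simp [rowVal, h]

lemma nth_succ_of_lt (h : j < (row π i).length) : nth π i (j + 1) = (row π i)[j] := by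
  simp [nth, h]

lemma exists_getElem_of_natE_le_rowVal {b : ℕ} (h : natE b ≤ rowVal π i (j + 1)) :
    ∃ hj : j < (row π i).length, b ≤ (row π i)[j] := by
  by_cases hj : j < (row π i).length
  · rw [rowVal_succ_of_lt hj, natE_le_natE_iff] at h
    exact ⟨hj, h⟩
  · simp only [rowVal, Nat.add_one_ne_zero, if_false, Nat.add_sub_cancel,
      List.getElem?_eq_none (not_lt.mp hj)] at h
    exact absurd (le_bot_iff.mp h) (EReal.coe_ne_bot _)

lemma le_nth_of_natE_le_rowVal {b : ℕ} (hj : j ≠ 0) (h : natE b ≤ rowVal π i j) :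
    b ≤ nth π i j := by
  obtain ⟨j, rfl⟩ := Nat.exists_eq_succ_of_ne_zero hj
  obtain ⟨hj, hb⟩ := exists_getElem_of_natE_le_rowVal h
  rwa [nth_succ_of_lt hj]

variable {p a b : ℕ}

lemma le_getElem_row_of_lt (hb : natE b ≤ rowVal π i p) (hj : j < (row π i).length)
    (hjp : j < p) : b ≤ (row π i)[j] := by
  obtain ⟨p, rfl⟩ := Nat.exists_eq_succ_of_ne_zero (by omega : p ≠ 0)
  obtain ⟨hp, hbp⟩ := exists_getElem_of_natE_le_rowVal hb
  exact hbp.trans ((sortedGE_row π i).getElem_ge_getElem_of_le (by omega))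

lemma getElem_row_lt_of_le (ha : rowVal π i (p + 1) < natE a) (hj : j < (row π i).length)
    (hpj : p ≤ j) : (row π i)[j] < a := by
  have hp : p < (row π i).length := by omega
  rw [rowVal_succ_of_lt hp, natE_lt_natE_iff] at ha
  exact ((sortedGE_row π i).getElem_ge_getElem_of_le hpj).trans_lt ha

lemma lt_or_le_of_mem_row (ha : rowVal π i (p + 1) < natE a) (hb : natE b ≤ rowVal π i p)
    {x : ℕ} (hx : x ∈ row π i) : x < a ∨ b ≤ x := by
  obtain ⟨j, hj, rfl⟩ := List.mem_iff_getElem.mp hx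
  by_cases hjp : j < p
  · exact Or.inr (le_getElem_row_of_lt hb hj hjp)
  · exact Or.inl (getElem_row_lt_of_le ha hj (not_lt.mp hjp))

lemma getElem_row_eq_of_mem (ha : rowVal π i (p + 1) < natE (a + 1))
    (hb : natE b ≤ rowVal π i p) (hab : a < b) (hmem : a ∈ row π i) :
    ∃ hp : p < (row π i).length, (row π i)[p] = a := by
  obtain ⟨j, hj, rfl⟩ := List.mem_iff_getElem.mp hmem
  have hpj : p ≤ j := not_lt.mp fun hjp => (le_getElem_row_of_lt hb hj hjp).not_gt hab
  have hp : p < (row π i).length := by omega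
  refine ⟨hp, le_antisymm ?_ ((sortedGE_row π i).getElem_ge_getElem_of_le hpj)⟩
  exact Nat.le_of_lt_succ (getElem_row_lt_of_le ha hp le_rfl)

end rowVal

lemma startPair_snd_eq_zero_or_nth_sub_two_le (π : Partition) (b : ℕ) :
    (startPair π b).2 = 0 ∨ nth π 2 b - 2 ≤ (startPair π b).2 := by
  cases b with
  | zero => exact Or.inl rfl
  | succ b =>
    simp only [startPair]
    split_ifs <;> simp <;> omega

lemma startType_succ_eq_zero_or_one_spec {π : Partition} {b : ℕ}
    (h : startType π (b + 1) = 0 ∨ startType π (b + 1) = 1) :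
    (Marked π (nth π 2 (b + 1) - 1) 1 ∨ Marked π (nth π 2 (b + 1) - 2) 1) ∧
    (Marked π (nth π 2 (b + 1) + 2) 1 → b ≠ 0 ∧ (startPair π b).2 = nth π 2 (b + 1) + 2) := by
  simp only [startType, startPair] at h
  split_ifs at h with _ hb <;> norm_num at h
  all_goals
    rename_i hsel
    simp only [Bool.and_eq_true, Bool.or_eq_true, Bool.not_eq_true', decide_eq_true_eq,
      decide_eq_false_iff_not] at hsel
    refine ⟨by tauto, fun hM => ?_⟩
    first
      | exact absurd hM.mem_parts hsel.2
      | exact ⟨hb, hsel.2.resolve_left (not_not_intro hM)⟩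

theorem marks_le_one_of_ge_general (k r p t : ℕ)
    (π : Partition) (hπ : π ∈ Clt k r p t)
    (hge : natE (2 * t + 6) ≤ rowVal π 2 p) :
    ∀ m, (Marked π (2 * t + 2) m ∨ Marked π (2 * t + 4) m) → m ≤ 1 := by
  obtain ⟨-, hodd, hlt, -, -, hstart⟩ := hπ
  intro m hm
  by_contra! hm1
  obtain ⟨x, hx, hxm⟩ : ∃ x, (x = 2 * t + 2 ∨ x = 2 * t + 4) ∧ Marked π x m := by
    rcases hm with hm | hm <;> exact ⟨_, by simp, hm⟩
  obtain ⟨q, hqx, hxq, hq⟩ := hxm.exists_near two_pos hm1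
  obtain ⟨rfl, rfl⟩ : x = 2 * t + 2 ∧ q = 2 * t := by
    have := lt_or_le_of_mem_row hlt hge hq.mem_row
    omega
  obtain ⟨hp, hpq⟩ := getElem_row_eq_of_mem hlt hge (by omega) hq.mem_row
  have hv : nth π 2 (p + 1) = 2 * t := (nth_succ_of_lt hp).trans hpq
  obtain ⟨hbelow, habove⟩ :=
    startType_succ_eq_zero_or_one_spec (hstart (by rw [rowVal_succ_of_lt hp, hpq]))
  rw [hv] at hbelow habove
  obtain ⟨q₁, hq₁x, hxq₁, hq₁⟩ := hxm.exists_near one_pos (by omega)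
  have hq₁_ne : q₁ ≠ 2 * t + 1 := fun h => by
    have := hodd q₁ hq₁.mem_parts (by omega)
    omega
  rcases (by omega : q₁ = 2 * t ∨ q₁ = 2 * t + 2) with rfl | rfl
  · obtain ⟨w, hw, hwm⟩ : ∃ w, (w = 2 * t - 1 ∨ w = 2 * t - 2) ∧ Marked π w 1 := by
      rcases hbelow with h | h <;> exact ⟨_, by simp, h⟩
    have hw_pos := π.pos w hwm.mem_parts
    have hc := hq₁.conflict_eq_false hwm (by omega)
    rw [conflict_of_even (by omega) (by omega)] at hc
    simp at hc
  · obtain ⟨hp0, hsp⟩ := habove hq₁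
    have := le_nth_of_natE_le_rowVal hp0 hge
    rcases startPair_snd_eq_zero_or_nth_sub_two_le π p with h | h <;> omega

/-- Lemma 2.6: if `π ∈ C_<(k,r|p,t)` and `π^{(2)}_p ≥ 2t + 6`, then the marks
of the parts `2t+2` and `2t+4` in `GG(π)` are at most `1`. -/
theorem marks_le_one_of_ge (k r p t : ℕ) (hrk : r ≤ k) (hr : 3 ≤ r)
    (π : Partition) (hπ : π ∈ Clt k r p t)
    (hge : natE (2 * t + 6) ≤ rowVal π 2 p) :
    ∀ m, (Marked π (2 * t + 2) m ∨ Marked π (2 * t + 4) m) → m ≤ 1 :=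
  marks_le_one_of_ge_general k r p t π hπ hge

end Bressoud
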